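/- Let d ≥ 1. For each i = 1,…,d let k_i ∈ (0,π) with sin(2k_i) ≠ 0, and let t_i ∈ ℝ satisfy t_i + sin(2k_i)·m − sin(2k_i m) ≠ 0 for every m ∈ ℤ. Let g_i(m) := sin(2k_i)·m − sin(2k_i m), let V_i : ℤ → ℝ be V_i(m) := cos(k_i)·[ (g_i(m)−g_i(m−1))/(t_i+g_i(m−1)) − (g_i(m+1)−g_i(m))/(t_i+g_i(m+1)) ] − 2·sin(k_i)·sin(2k_i)·sin(2k_i m)·(t_i+g_i(m)) / ( (t_i+g_i(m−1))·(t_i+g_i(m+1)) ), and define V : ℤ^d → ℝ by V(n₁,…,n_d) := Σ_{i=1}^d V_i(n_i) and ψ(n₁,…,n_d) := Π_{i=1}^d sin(k_i n_i)/(t_i + g_i(n_i)). Then ψ ∈ ℓ²(ℤ^d), ψ ≠ 0, and (Δ + V)ψ = E·ψ, where E := 2d − Σ_{i=1}^d 2cos(k_i). -/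

import Mathlib

open scoped BigOperators


lemma cos_two' (x : ℝ) : Real.cos (2*x) = 1 - 2 * Real.sin x ^ 2 := by
  have h := Real.sin_sq_add_cos_sq x
  rw [Real.cos_two_mul]; nlinarith

noncomputable def Faux (k t : ℝ) (g : ℤ → ℝ) (m : ℤ) : ℝ :=
  Real.sin (k * (m : ℝ)) / (t + g m)

lemma oneDimKey (k t : ℝ) (g : ℤ → ℝ)
    (hg : ∀ m : ℤ, g m = Real.sin (2*k) * (m:ℝ) - Real.sin (2*k*(m:ℝ)))
    (ht : ∀ m : ℤ, t + g m ≠ 0) (Vi : ℤ → ℝ)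
    (hVi : ∀ m : ℤ, Vi m =
      Real.cos k * ((g m - g (m-1)) / (t + g (m-1)) - (g (m+1) - g m) / (t + g (m+1)))
        - 2 * Real.sin k * Real.sin (2*k) * Real.sin (2*k*(m:ℝ)) * (t + g m)
          / ((t + g (m-1)) * (t + g (m+1))))
    (m : ℤ) :
    Faux k t g (m+1) + Faux k t g (m-1) = (2 * Real.cos k + Vi m) * Faux k t g m := by
  show Real.sin (k*((m+1:ℤ):ℝ)) / (t + g (m+1)) + Real.sin (k*((m-1:ℤ):ℝ)) / (t + g (m-1))
      = (2 * Real.cos k + Vi m) * (Real.sin (k*(m:ℝ)) / (t + g m))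
  have hA := ht (m-1); have hB := ht m; have hC := ht (m+1)
  rw [hg (m-1)] at hA; rw [hg m] at hB; rw [hg (m+1)] at hC
  rw [hVi m, hg m, hg (m-1), hg (m+1)]
  push_cast at hA hB hC ⊢
  have e1 : k*((m:ℝ)+1) = k*(m:ℝ) + k := by ring
  have e2 : k*((m:ℝ)-1) = k*(m:ℝ) - k := by ring
  have e3 : 2*k*((m:ℝ)+1) = 2*k*(m:ℝ) + 2*k := by ring
  have e4 : 2*k*((m:ℝ)-1) = 2*k*(m:ℝ) - 2*k := by ring
  have e5 : Real.sin (2*k*(m:ℝ)) = 2 * Real.sin (k*(m:ℝ)) * Real.cos (k*(m:ℝ)) := by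
    have h : 2*k*(m:ℝ) = 2*(k*(m:ℝ)) := by ring
    rw [h, Real.sin_two_mul]
  have e6 : Real.cos (2*k*(m:ℝ)) = 1 - 2 * Real.sin (k*(m:ℝ)) ^ 2 := by
    have h : 2*k*(m:ℝ) = 2*(k*(m:ℝ)) := by ring
    rw [h, cos_two' (k*(m:ℝ))]
  rw [e4, Real.sin_sub, e5, e6] at hA
  rw [e5] at hB
  rw [e3, Real.sin_add, e5, e6] at hC
  rw [e1, e2, e3, e4]
  simp only [Real.sin_add, Real.sin_sub]
  rw [e5, e6]
  generalize Real.sin (k*(m:ℝ)) = s1 at *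
  generalize Real.cos (k*(m:ℝ)) = c1 at *
  generalize Real.sin (2*k) = s2 at *
  generalize Real.cos (2*k) = c2 at *
  generalize hAe : t + (s2 * ((m:ℝ) - 1) - (2 * s1 * c1 * c2 - (1 - 2 * s1 ^ 2) * s2)) = A at hA ⊢
  generalize hBe : t + (s2 * (m:ℝ) - 2 * s1 * c1) = B at hB ⊢
  generalize hCe : t + (s2 * ((m:ℝ) + 1) - (2 * s1 * c1 * c2 + (1 - 2 * s1 ^ 2) * s2)) = C at hC ⊢
  field_simp
  subst hAe hBe hCe
  ring

lemma oneDimSummable (k t : ℝ) (hs : Real.sin (2*k) ≠ 0) (g : ℤ → ℝ)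
    (hg : ∀ m : ℤ, g m = Real.sin (2*k) * (m:ℝ) - Real.sin (2*k*(m:ℝ)))
    (ht : ∀ m : ℤ, t + g m ≠ 0) :
    Summable fun m : ℤ => (Faux k t g m) ^ 2 := by
  set c : ℝ := |Real.sin (2*k)| with hc
  have hc0 : 0 < c := abs_pos.mpr hs
  obtain ⟨N, hN⟩ := exists_nat_ge ((2*(|t|+1))/c)
  have hNc : 2*(|t|+1) ≤ c * N := by
    rw [div_le_iff₀ hc0] at hN; linarith [hN]
  have hGsum : Summable fun m : ℤ => (4/c^2) * (1/(m:ℝ)^2) :=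
    (Real.summable_one_div_int_pow.mpr one_lt_two).mul_left _
  apply Summable.of_norm_bounded_eventually hGsum
  rw [Filter.eventually_cofinite]
  apply Set.Finite.subset (Set.finite_Icc (-(N:ℤ)) (N:ℤ))
  intro m hm
  simp only [Set.mem_setOf_eq, not_le] at hm
  by_contra hmem
  apply absurd hm; push_neg
  have hmN : (N:ℝ) ≤ |(m:ℝ)| := by
    simp only [Set.mem_Icc, not_and_or, not_le] at hmem
    rcases hmem with h | h
    · have : (m:ℝ) < -(N:ℝ) := by exact_mod_cast h
      rw [abs_of_neg (by linarith [Nat.cast_nonneg (α := ℝ) N])]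
      linarith
    · have : (N:ℝ) < (m:ℝ) := by exact_mod_cast h
      rw [abs_of_pos (by linarith [Nat.cast_nonneg (α := ℝ) N])]
      linarith
  -- lower bound on |t + g m|
  have hsin1 : |Real.sin (2*k*(m:ℝ))| ≤ 1 := Real.abs_sin_le_one _
  have hgm : c * |(m:ℝ)| - 1 ≤ |g m| := by
    rw [hg m]
    have h1 : |Real.sin (2*k) * (m:ℝ)| = c * |(m:ℝ)| := by rw [abs_mul]
    calc c * |(m:ℝ)| - 1 ≤ |Real.sin (2*k) * (m:ℝ)| - |Real.sin (2*k*(m:ℝ))| := by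
          rw [h1]; linarith
      _ ≤ |Real.sin (2*k) * (m:ℝ) - Real.sin (2*k*(m:ℝ))| := abs_sub_abs_le_abs_sub _ _
  have htg : c * |(m:ℝ)| / 2 ≤ |t + g m| := by
    have h2 : |g m| - |t| ≤ |t + g m| := by
      have h2a := abs_sub_abs_le_abs_sub (g m) (-t)
      simp only [abs_neg, sub_neg_eq_add] at h2a
      have h2b : |g m + t| = |t + g m| := by rw [add_comm]
      linarith
    have h3 : 2*(|t|+1) ≤ c * |(m:ℝ)| := le_trans hNc (by
      apply mul_le_mul_of_nonneg_left hmN hc0.le)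
    linarith
  have hm0 : (m:ℝ) ≠ 0 := by
    intro h0
    rw [h0, abs_zero] at hmN
    have : (2:ℝ) ≤ 0 := by
      have := mul_le_mul_of_nonneg_left hmN hc0.le
      have hc1 : c ≤ 1 := abs_le.mpr ⟨Real.neg_one_le_sin _, Real.sin_le_one _⟩
      nlinarith [abs_nonneg t]
    linarith
  have hden : (c * |(m:ℝ)| / 2)^2 ≤ (t + g m)^2 := by
    have h0 : 0 ≤ c * |(m:ℝ)| / 2 := by positivity
    calc (c * |(m:ℝ)| / 2)^2 ≤ |t + g m|^2 := by nlinarith [htg]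
      _ = (t + g m)^2 := sq_abs _
  have hnum : (Real.sin (k*(m:ℝ)))^2 ≤ 1 := by
    nlinarith [Real.abs_sin_le_one (k*(m:ℝ)), abs_nonneg (Real.sin (k*(m:ℝ))),
      sq_abs (Real.sin (k*(m:ℝ))), Real.neg_one_le_sin (k*(m:ℝ)), Real.sin_le_one (k*(m:ℝ))]
  have hdpos : 0 < (c * |(m:ℝ)| / 2)^2 := by
    have : 0 < |(m:ℝ)| := abs_pos.mpr hm0
    positivity
  have key : (Faux k t g m)^2 ≤ 4/c^2 * (1/(m:ℝ)^2) := by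
    have : (Faux k t g m)^2 = (Real.sin (k*(m:ℝ)))^2 / (t + g m)^2 := by
      rw [Faux, div_pow]
    rw [this]
    have h4 : (Real.sin (k*(m:ℝ)))^2 / (t + g m)^2 ≤ 1 / (c * |(m:ℝ)| / 2)^2 :=
      div_le_div₀ (by norm_num) hnum hdpos hden
    have h5 : 1 / (c * |(m:ℝ)| / 2)^2 = 4/c^2 * (1/(m:ℝ)^2) := by
      rw [div_pow, mul_pow, sq_abs (m:ℝ)]
      field_simp
      ring
    linarith [h4, h5.symm.le, h5]
  rw [Real.norm_eq_abs, abs_of_nonneg (sq_nonneg _)]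
  exact key

lemma prodSummable : ∀ (d : ℕ) (h : Fin d → ℤ → ℝ), (∀ i m, 0 ≤ h i m) →
    (∀ i, Summable (h i)) → Summable fun n : Fin d → ℤ => ∏ i, h i (n i) := by
  intro d
  induction d with
  | zero =>
    intro h _ _
    exact Summable.of_finite
  | succ d ih =>
    intro h hnn hsum
    have htail : Summable fun y : Fin d → ℤ => ∏ i : Fin d, h i.succ (y i) :=
      ih (fun i => h i.succ) (fun i m => hnn i.succ m) (fun i => hsum i.succ)
    have hprod : Summable fun p : ℤ × (Fin d → ℤ) => h 0 p.1 * ∏ i : Fin d, h i.succ (p.2 i) := by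
      apply Summable.mul_of_nonneg (hsum 0) htail (fun m => hnn 0 m)
      exact fun y => Finset.prod_nonneg fun i _ => hnn i.succ (y i)
    refine ((Fin.consEquiv (fun _ : Fin (d+1) => ℤ)).summable_iff).mp ?_
    apply hprod.congr
    intro p
    simp only [Function.comp_apply, Fin.consEquiv_apply]
    rw [Fin.prod_univ_succ]
    simp [Fin.cons_zero, Fin.cons_succ]

/-- Pointwise discrete Laplacian on `ℤ^d` (real-valued functions):
`(Δu)(n) = ∑_{|n-m|=1} (u(n) - u(m))`. -/
noncomputable def discreteLapR (d : ℕ) (u : (Fin d → ℤ) → ℝ) (n : Fin d → ℤ) : ℝ :=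
  ∑ i : Fin d,
    (2 * u n - u (Function.update n i (n i - 1)) - u (Function.update n i (n i + 1)))

/-- Proposition 1.6: the multi-dimensional Wigner–von Neumann type potential
`V(n) = ∑ᵢ Vᵢ(nᵢ)` has the embedded eigenvalue `E = 2d − ∑ᵢ 2cos(kᵢ)` with
eigenvector `ψ(n) = Πᵢ sin(kᵢnᵢ)/(tᵢ + gᵢ(nᵢ)) ∈ ℓ²(ℤ^d)`. -/
theorem wigner_von_neumann_embedded_eigenvalue_multidim
    (d : ℕ) (hd : 1 ≤ d) (k t : Fin d → ℝ)
    (hk : ∀ i, k i ∈ Set.Ioo (0 : ℝ) Real.pi)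
    (hsin : ∀ i, Real.sin (2 * k i) ≠ 0)
    (g : Fin d → ℤ → ℝ)
    (hg : ∀ i (m : ℤ), g i m = Real.sin (2 * k i) * (m : ℝ) - Real.sin (2 * k i * (m : ℝ)))
    (ht : ∀ i (m : ℤ), t i + g i m ≠ 0)
    (Vi : Fin d → ℤ → ℝ)
    (hVi : ∀ i (m : ℤ), Vi i m =
      Real.cos (k i) * ((g i m - g i (m - 1)) / (t i + g i (m - 1))
          - (g i (m + 1) - g i m) / (t i + g i (m + 1)))
        - 2 * Real.sin (k i) * Real.sin (2 * k i) * Real.sin (2 * k i * (m : ℝ))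
            * (t i + g i m)
          / ((t i + g i (m - 1)) * (t i + g i (m + 1))))
    (V : (Fin d → ℤ) → ℝ) (hV : ∀ n, V n = ∑ i, Vi i (n i))
    (ψ : (Fin d → ℤ) → ℝ)
    (hψdef : ∀ n, ψ n = ∏ i, Real.sin (k i * (n i : ℝ)) / (t i + g i (n i)))
    (E : ℝ) (hE : E = 2 * d - ∑ i, 2 * Real.cos (k i)) :
    (Summable fun n : Fin d → ℤ => (ψ n) ^ 2) ∧
    ψ ≠ 0 ∧
    (∀ n, discreteLapR d ψ n + V n * ψ n = E * ψ n) := by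
  have hψF : ∀ n, ψ n = ∏ i, Faux (k i) (t i) (g i) (n i) := by
    intro n; rw [hψdef]; rfl
  have hupd : ∀ (n : Fin d → ℤ) (i : Fin d) (x : ℤ),
      ψ (Function.update n i x) =
        Faux (k i) (t i) (g i) x * ∏ j ∈ Finset.univ.erase i, Faux (k j) (t j) (g j) (n j) := by
    intro n i x
    rw [hψF]
    have hfun : ∀ j : Fin d, Faux (k j) (t j) (g j) (Function.update n i x j) =
        Function.update (fun j => Faux (k j) (t j) (g j) (n j)) i
          (Faux (k i) (t i) (g i) x) j := by
      intro j
      rcases eq_or_ne j i with rfl | hj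
      · simp
      · simp [Function.update_of_ne hj]
    rw [Finset.prod_congr rfl (fun j _ => hfun j),
      Finset.prod_update_of_mem (Finset.mem_univ i), Finset.sdiff_singleton_eq_erase]
  have hψn : ∀ (n : Fin d → ℤ) (i : Fin d),
      ψ n = Faux (k i) (t i) (g i) (n i) *
        ∏ j ∈ Finset.univ.erase i, Faux (k j) (t j) (g j) (n j) := by
    intro n i
    rw [hψF, ← Finset.mul_prod_erase Finset.univ _ (Finset.mem_univ i)]
  refine ⟨?_, ?_, ?_⟩
  · -- summability
    have : (fun n : Fin d → ℤ => (ψ n)^2) =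
        fun n => ∏ i, (Faux (k i) (t i) (g i) (n i))^2 := by
      funext n
      rw [hψF, ← Finset.prod_pow]
    rw [this]
    apply prodSummable d _ (fun i m => sq_nonneg _)
    intro i
    exact oneDimSummable (k i) (t i) (hsin i) (g i) (hg i) (ht i)
  · -- nonzero
    intro h0
    have h1 := congrFun h0 (fun _ => 1)
    rw [hψF] at h1
    simp only [Pi.zero_apply] at h1
    have : ∀ i : Fin d, Faux (k i) (t i) (g i) 1 ≠ 0 := by
      intro i
      rw [Faux]
      apply div_ne_zero
      · simp only [Int.cast_one, mul_one]
        exact ne_of_gt (Real.sin_pos_of_pos_of_lt_pi (hk i).1 (hk i).2)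
      · exact ht i 1
    exact (Finset.prod_ne_zero_iff.mpr (fun i _ => this i)) h1
  · -- eigenvalue equation
    intro n
    have hE' : E = ∑ i : Fin d, (2 - 2 * Real.cos (k i)) := by
      rw [hE, Finset.sum_sub_distrib, Finset.sum_const, Finset.card_univ, Fintype.card_fin,
        nsmul_eq_mul]
      ring
    rw [discreteLapR, hV, hE', Finset.sum_mul, Finset.sum_mul, ← Finset.sum_add_distrib]
    apply Finset.sum_congr rfl
    intro i _
    have hkey := oneDimKey (k i) (t i) (g i) (hg i) (ht i) (Vi i) (hVi i) (n i)
    rw [hupd n i (n i - 1), hupd n i (n i + 1), hψn n i]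
    linear_combination (-(∏ j ∈ Finset.univ.erase i, Faux (k j) (t j) (g j) (n j))) * hkey
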